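/- arXiv:2211.06125 — 3 statements merged into one kernel-verified Lean document; each statement's English description precedes it below -/
import Mathlib

section
/- Let R be a ring and let D, E, f be units of R. Assume E*f − f*E = D*f − f*D, and set c := E*f − f*E and c' := E*f⁻¹ − f⁻¹*E. Then f*E*D*E + c*D*E − E*D*f*c'*f + E*c*c'*f is a unit of R, and its inverse equals f⁻¹*E⁻¹ * f*D⁻¹ * f⁻¹*E⁻¹. (This is the algebraic identity behind equation (4.3) of the paper, expressing f⁻¹(D̂*_N)⁻¹ · f D̂_N⁻¹ · f⁻¹(D̂*_N)⁻¹ as (f·D̂*_N D̂_N D̂*_N + c(df) D̂_N D̂*_N − D̂*_N D̂_N f·c(df⁻¹)·f + D̂*_N c(df) c(df⁻¹) f)⁻¹.) -/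
/-- for units `D`, `E`, `f` of a ring `R` with
`E*f - f*E = D*f - f*D =: c` and `c' := E*f⁻¹ - f⁻¹*E`, the element
`f*E*D*E + c*D*E - E*D*f*c'*f + E*c*c'*f` is a unit with inverse
`f⁻¹*E⁻¹ * f*D⁻¹ * f⁻¹*E⁻¹`. -/
theorem stmt1 (R : Type*) [Ring R] (D E f : Rˣ)
    (h : (E : R) * f - (f : R) * E = (D : R) * f - (f : R) * D) :
    ∃ u : Rˣ, (u : R) =
        (f : R) * E * D * E
          + ((E : R) * f - (f : R) * E) * D * E
          - (E : R) * D * f * ((E : R) * (↑f⁻¹ : R) - (↑f⁻¹ : R) * E) * f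
          + (E : R) * ((E : R) * f - (f : R) * E)
              * ((E : R) * (↑f⁻¹ : R) - (↑f⁻¹ : R) * E) * f ∧
      ((↑u⁻¹ : R) =
        (↑f⁻¹ : R) * (↑E⁻¹ : R) * ((f : R) * (↑D⁻¹ : R)) * ((↑f⁻¹ : R) * (↑E⁻¹ : R))) := by
  refine ⟨E * f * D * f⁻¹ * E * f, ?_, ?_⟩
  · have hB : (↑f⁻¹ : R) * f = 1 := f.inv_mul
    push_cast
    linear_combination (norm := noncomm_ring)
      (E : R) * h * ((↑f⁻¹ : R) * E * f) - (E : R) * h * E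
        + ((E : R) * D * f * E) * hB
        - ((E : R) * ((E : R) * f - (f : R) * E) * E) * hB
  · simp [mul_assoc]
end

section
/- For every real number ξ₀ and all complex numbers a, b, the circle integral (1/(2πi)) ∮_{|η−i|=1/2} (a + η·b) / ((1+η²)² · (ξ₀ − η)) dη equals −((i·ξ₀ + 2)·a + i·b) / (4·(ξ₀ − i)²). (This scalar identity is the paper's computation (3.27) of the Boutet de Monvel projection π⁺_{ξₙ}[c(ξ)/|ξ|⁴] on the unit cosphere, with a and b playing the roles of c(ξ') and c(dxₙ).) -/
/-!
Factor `(1 + η²)² = (η - i)² (η + i)²`. The remaining factor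
`f η = (a + η b) / ((η + i)² (ξ₀ - η))` is holomorphic on the upper half-plane, which contains the
closed disc `|η - i| ≤ 1/2`, so Cauchy's formula for a double pole turns the normalised integral
into `f'(i)`, a rational expression evaluated by the quotient rule.
-/

open Complex Metric

lemma closedBall_I_half_subset_upperHalfPlane : closedBall I (1 / 2) ⊆ {z : ℂ | 0 < z.im} := by
  intro z hz
  have h : |z.im - 1| ≤ 1 / 2 := by
    calc |z.im - 1| = |(z - I).im| := by simp
      _ ≤ ‖z - I‖ := abs_im_le_norm _
      _ ≤ 1 / 2 := by rwa [← dist_eq]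
  simp only [Set.mem_ofPred_eq]
  linarith [neg_abs_le (z.im - 1)]

lemma one_add_sq_sq (z : ℂ) : (1 + z ^ 2) ^ 2 = (z - I) ^ 2 * (z + I) ^ 2 := by
  linear_combination (1 + 2 * z ^ 2 - I ^ 2) * I_sq

lemma differentiableOn_upperHalfPlane_div {ξ₀ : ℂ} (hξ₀ : ξ₀.im ≤ 0) (a b : ℂ) :
    DifferentiableOn ℂ (fun η => (a + η * b) / ((η + I) ^ 2 * (ξ₀ - η))) {z : ℂ | 0 < z.im} := by
  intro z (hz : 0 < z.im)
  have h_add : z + I ≠ 0 := fun h => by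
    have := congrArg im h
    simp only [add_im, I_im, zero_im] at this
    linarith
  have h_sub : ξ₀ - z ≠ 0 := fun h => by
    have := congrArg im h
    simp only [sub_im, zero_im] at this
    linarith
  fun_prop (disch := exact mul_ne_zero (pow_ne_zero 2 h_add) h_sub)

lemma deriv_div_at_I {ξ₀ : ℂ} (hξ₀ : ξ₀ ≠ I) (a b : ℂ) :
    deriv (fun η => (a + η * b) / ((η + I) ^ 2 * (ξ₀ - η))) I =
      -((I * ξ₀ + 2) * a + I * b) / (4 * (ξ₀ - I) ^ 2) := by
  have h_num : HasDerivAt (fun η : ℂ => a + η * b) b I := by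
    simpa using ((hasDerivAt_id I).mul_const b).const_add a
  have h_den : HasDerivAt (fun η : ℂ => (η + I) ^ 2 * (ξ₀ - η))
      (2 * (I + I) * (ξ₀ - I) - (I + I) ^ 2) I := by
    have h_sq : HasDerivAt (fun η : ℂ => (η + I) ^ 2) (2 * (I + I)) I := by
      simpa using ((hasDerivAt_id I).add_const I).fun_pow 2
    have h_lin : HasDerivAt (fun η : ℂ => ξ₀ - η) (-1) I := by
      simpa using (hasDerivAt_id I).const_sub ξ₀
    exact (h_sq.fun_mul h_lin).congr_deriv (by ring)
  have h_sub : ξ₀ - I ≠ 0 := sub_ne_zero.mpr hξ₀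
  have h_den_ne : (I + I) ^ 2 * (ξ₀ - I) ≠ 0 := by
    refine mul_ne_zero (pow_ne_zero 2 ?_) h_sub
    rw [← two_mul]
    exact mul_ne_zero two_ne_zero I_ne_zero
  rw [(h_num.fun_div h_den h_den_ne).deriv, div_eq_div_iff (pow_ne_zero 2 h_den_ne)
    (mul_ne_zero (by norm_num) (pow_ne_zero 2 h_sub))]
  linear_combination (16 * (ξ₀ - I) ^ 2 *
    (a * ξ₀ * I ^ 3 - a * ξ₀ * I + 2 * a * I ^ 2 + b * I ^ 3)) * I_sq

/-- the contour-integral computation (3.27) of the paper. -/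
theorem stmt7 (ξ₀ : ℝ) (a b : ℂ) :
    (1 / (2 * (Real.pi : ℂ) * I)) *
        (∮ η in C(I, 1/2), (a + η * b) / ((1 + η ^ 2) ^ 2 * ((ξ₀ : ℂ) - η))) =
      -((I * (ξ₀ : ℂ) + 2) * a + I * b) / (4 * ((ξ₀ : ℂ) - I) ^ 2) := by
  have h_integrand : (fun η => (a + η * b) / ((1 + η ^ 2) ^ 2 * ((ξ₀ : ℂ) - η))) =
      fun η => ((η - I) ^ 2)⁻¹ • ((a + η * b) / ((η + I) ^ 2 * ((ξ₀ : ℂ) - η))) := by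
    funext η
    rw [one_add_sq_sq]
    simp only [smul_eq_mul, div_eq_mul_inv, mul_inv]
    ring
  have h_cauchy := two_pi_I_inv_smul_circleIntegral_sub_sq_inv_smul_of_differentiable
    (isOpen_lt continuous_const continuous_im) closedBall_I_half_subset_upperHalfPlane
    (differentiableOn_upperHalfPlane_div (ofReal_im ξ₀).le a b)
    (mem_ball_self (by norm_num : (0 : ℝ) < 1 / 2))
  have h_ne : (ξ₀ : ℂ) ≠ I := fun h => by simpa using congrArg im h
  rw [h_integrand, one_div, ← smul_eq_mul, h_cauchy, deriv_div_at_I h_ne]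
end

section
/- The integral over the real line ∫_ℝ [ 12(i·x² + x − 2i)/((x−i)³·(x+i)³) + 48·i·x/((x−i)³·(x+i)⁴) ] dx equals −9πi/2. (This is the residue computation in equation (3.72) of the paper, which yields the case (c) boundary contribution −(9/2)π h'(0) Ω₃ after multiplication by −i h'(0) Ω₃.) -/
/-!
Partial fractions split the integrand into `-(9i/2) / (1 + x²)` plus multiples of
`(x + i)⁻ⁿ` with `n = 2, 3, 4`. Each `(x + i)⁻ⁿ`, `n ≥ 2`, is integrable with the antiderivative
`(x + i)^(1 - n) / (1 - n)`, which vanishes at `±∞`, so it integrates to `0`; the remaining term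
contributes `-(9i/2) π`.
-/

open Complex MeasureTheory Filter Topology

lemma ofReal_add_I_ne_zero (x : ℝ) : (x : ℂ) + I ≠ 0 := fun h => by
  simpa using congrArg im h

lemma ofReal_sub_I_ne_zero (x : ℝ) : (x : ℂ) - I ≠ 0 := fun h => by
  simpa using congrArg im h

lemma one_add_sq_le_norm_ofReal_add_I_pow (x : ℝ) {n : ℕ} (hn : 2 ≤ n) :
    1 + x ^ 2 ≤ ‖(x : ℂ) + I‖ ^ n := by
  have hsq : ‖(x : ℂ) + I‖ ^ 2 = 1 + x ^ 2 := by
    rw [← normSq_eq_norm_sq, normSq_apply]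
    simp only [add_re, ofReal_re, I_re, add_im, ofReal_im, I_im]
    ring
  have hone : 1 ≤ ‖(x : ℂ) + I‖ := by nlinarith [norm_nonneg ((x : ℂ) + I)]
  exact hsq ▸ pow_le_pow_right₀ hone hn

lemma integrable_inv_ofReal_add_I_pow {n : ℕ} (hn : 2 ≤ n) :
    Integrable fun x : ℝ => (((x : ℂ) + I) ^ n)⁻¹ := by
  have hcont : Continuous fun x : ℝ => (((x : ℂ) + I) ^ n)⁻¹ :=
    (by fun_prop : Continuous fun x : ℝ => ((x : ℂ) + I) ^ n).inv₀
      fun x => pow_ne_zero _ (ofReal_add_I_ne_zero x)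
  refine integrable_inv_one_add_sq.mono hcont.aestronglyMeasurable (.of_forall fun x => ?_)
  rw [norm_inv, norm_pow, norm_inv, Real.norm_of_nonneg (by positivity)]
  exact inv_anti₀ (by positivity) (one_add_sq_le_norm_ofReal_add_I_pow x hn)

lemma integral_inv_ofReal_add_I_pow {n : ℕ} (hn : 2 ≤ n) :
    ∫ x : ℝ, (((x : ℂ) + I) ^ n)⁻¹ = 0 := by
  set m : ℤ := -(n - 1 : ℕ)
  have hm : (m : ℂ) ≠ 0 := mod_cast (by omega : m ≠ 0)
  let F : ℝ → ℂ := fun x => ((x : ℂ) + I) ^ m / m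
  have hderiv (x : ℝ) : HasDerivAt F (((x : ℂ) + I) ^ n)⁻¹ x := by
    have hx := ofReal_add_I_ne_zero x
    have hu : HasDerivAt (fun x : ℝ => (x : ℂ) + I) 1 x := by
      simpa using ((hasDerivAt_id x).ofReal_comp).add_const I
    refine (((hasDerivAt_zpow m _ (.inl hx)).comp x hu).div_const (m : ℂ)).congr_deriv ?_
    rw [mul_one, mul_div_cancel_left₀ _ hm, show m - 1 = -n by omega, zpow_neg, zpow_natCast]
  have hlim : Tendsto F (Bornology.cobounded ℝ) (𝓝 0) := by
    have hinv : Tendsto (fun x : ℝ => ((x : ℂ) + I)⁻¹) (Bornology.cobounded ℝ) (𝓝 0) :=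
      tendsto_inv₀_cobounded.comp
        ((tendsto_add_const_cobounded I).comp (RCLike.tendsto_ofReal_cobounded_cobounded ℂ))
    have hpow := (hinv.pow (n - 1)).div_const (m : ℂ)
    rw [zero_pow (by omega), zero_div] at hpow
    refine hpow.congr fun x => ?_
    simp only [F, m, zpow_neg, zpow_natCast, inv_pow]
  simpa using integral_of_hasDerivAt_of_tendsto hderiv (integrable_inv_ofReal_add_I_pow hn)
    (hlim.mono_left IsOrderBornology.atBot_le_cobounded)
    (hlim.mono_left IsOrderBornology.atTop_le_cobounded)

lemma integrand_partial_fractions (z : ℂ) (h₁ : z - I ≠ 0) (h₂ : z + I ≠ 0) :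
    12 * (I * z ^ 2 + z - 2 * I) / ((z - I) ^ 3 * (z + I) ^ 3)
        + 48 * I * z / ((z - I) ^ 3 * (z + I) ^ 4)
      = -(9 * I / 2) * (1 + z ^ 2)⁻¹ + 9 * I / 2 * ((z + I) ^ 2)⁻¹ - 9 * ((z + I) ^ 3)⁻¹
        - 6 * I * ((z + I) ^ 4)⁻¹ := by
  have h : 1 + z ^ 2 = (z - I) * (z + I) := by linear_combination I_sq
  rw [h]
  field_simp
  linear_combination
    (18 * z ^ 4 + 24 * z ^ 2 - 36 * z ^ 2 * I ^ 2 + 72 * z * I - 48 * I ^ 2 + 18 * I ^ 4) * I_sq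

lemma integrable_inv_one_add_ofReal_sq : Integrable fun x : ℝ => (1 + (x : ℂ) ^ 2)⁻¹ := by
  simpa using integrable_inv_one_add_sq.ofReal (𝕜 := ℂ)

lemma integral_inv_one_add_ofReal_sq : ∫ x : ℝ, (1 + (x : ℂ) ^ 2)⁻¹ = (Real.pi : ℂ) := by
  simpa using integral_ofReal.trans (congrArg ofReal integral_univ_inv_one_add_sq)

/-- the residue computation (3.72) of the paper. -/
theorem stmt15 : (∫ x : ℝ, (12 * (I * (x : ℂ) ^ 2 + (x : ℂ) - 2 * I) / (((x : ℂ) - I) ^ 3 * ((x : ℂ) + I) ^ 3) + 48 * I * (x : ℂ) / (((x : ℂ) - I) ^ 3 * ((x : ℂ) + I) ^ 4))) = -9 * (Real.pi : ℂ) * I / 2 := by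
  have h₀ := integrable_inv_one_add_ofReal_sq
  have h₂ := integrable_inv_ofReal_add_I_pow (le_refl 2)
  have h₃ := integrable_inv_ofReal_add_I_pow (by norm_num : 2 ≤ 3)
  have h₄ := integrable_inv_ofReal_add_I_pow (by norm_num : 2 ≤ 4)
  rw [integral_congr_ae (.of_forall fun x : ℝ =>
      integrand_partial_fractions x (ofReal_sub_I_ne_zero x) (ofReal_add_I_ne_zero x)),
    integral_sub, integral_sub, integral_add]
  · simp only [integral_const_mul, integral_inv_one_add_ofReal_sq,
      integral_inv_ofReal_add_I_pow (le_refl 2), integral_inv_ofReal_add_I_pow (by norm_num : 2 ≤ 3),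
      integral_inv_ofReal_add_I_pow (by norm_num : 2 ≤ 4)]
    ring
  all_goals fun_prop
end
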